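/- arXiv:math/0406529 — 3 statements merged into one kernel-verified Lean document; each statement's English description precedes it below -/
import Mathlib

section
/- Let U, V, W be linear subspaces of ℝⁿ with V + W = ℝⁿ, with ∠_m(V,W) ≥ γ > 0 and ∠_M(U,V) ≤ δ, where dim U = dim V. Then there exists a constant C depending only on γ, dim V and n (not on U, V, W or δ) such that ∠_M(U∩W, V∩W) ≤ C·δ, provided U∩W and V∩W are nonzero and dim(U∩W) = dim(V∩W). -/
open RealInnerProductSpace

/-- Angle in [0, π/2] between the lines spanned by two vectors. -/
noncomputable def lineAngle {E : Type*} [NormedAddCommGroup E] [InnerProductSpace ℝ E]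
    (u v : E) : ℝ :=
  Real.arccos (|⟪u, v⟫| / (‖u‖ * ‖v‖))

/-- Maximal angle between two subspaces:
`∠_M(U,V) = max_{u∈U\0} min_{v∈V\0} ∠(u,v)`. -/
noncomputable def maxAngle {E : Type*} [NormedAddCommGroup E] [InnerProductSpace ℝ E]
    (U V : Submodule ℝ E) : ℝ :=
  sSup ((fun u => sInf (lineAngle u '' {v : E | v ∈ V ∧ v ≠ 0})) ''
    {u : E | u ∈ U ∧ u ≠ 0})

/-- Minimal angle between two subspaces, 0 in the non-transversal case,
computed on the orthogonal complement of the intersection otherwise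
(π/2 when the subspaces are complementary). -/
noncomputable def minAngle {E : Type*} [NormedAddCommGroup E] [InnerProductSpace ℝ E]
    (U V : Submodule ℝ E) : ℝ := by
  classical exact
  if U ⊔ V = ⊤ then
    if U ⊓ (U ⊓ V)ᗮ = ⊥ ∨ V ⊓ (U ⊓ V)ᗮ = ⊥ then Real.pi / 2
    else sInf {θ : ℝ | ∃ u ∈ U ⊓ (U ⊓ V)ᗮ, u ≠ 0 ∧
      ∃ v ∈ V ⊓ (U ⊓ V)ᗮ, v ≠ 0 ∧ θ = lineAngle u v}
  else 0


/-!
Transversality `∠_m(V, W) ≥ γ` gives, for every vector `e`, a splitting `e = (e - b) + b` with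
`e - b ∈ V`, `b ∈ W` and `‖b‖ ≤ K ‖e‖`, where `K` depends only on `γ`. Given a unit vector
`u ∈ U ∩ W`, choose `v ∈ V` with `∠(u, v) < θ` for `θ` slightly above `δ`; the point of the line `ℝ v`
closest to `u` lies within `sin θ ≤ θ` of `u`. Splitting that displacement and removing its
`W`-part from `u` produces `v' ∈ V ∩ W` with `‖u - v'‖ ≤ K θ`, hence `∠(u, v') ≤ (π/2) K θ` by
Jordan's inequality. Letting `θ → δ` gives the bound with `C = π K` when `K δ < 1/2`; otherwise
`∠_M ≤ π/2 ≤ π K δ` holds trivially.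
-/

open Filter Topology

section LineAngle

variable {E : Type*} [NormedAddCommGroup E] [InnerProductSpace ℝ E]

lemma lineAngle_nonneg (u v : E) : 0 ≤ lineAngle u v := Real.arccos_nonneg _

lemma lineAngle_le_pi_div_two (u v : E) : lineAngle u v ≤ Real.pi / 2 :=
  Real.arccos_le_pi_div_two.2 (by positivity)

lemma cos_lineAngle (u v : E) : Real.cos (lineAngle u v) = |⟪u, v⟫| / (‖u‖ * ‖v‖) := by
  have h := abs_real_inner_div_norm_mul_norm_le_one u v
  rw [abs_div, abs_mul, abs_norm, abs_norm] at h
  exact Real.cos_arccos (by linarith [show 0 ≤ |⟪u, v⟫| / (‖u‖ * ‖v‖) by positivity]) h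

lemma sin_lineAngle_nonneg (u v : E) : 0 ≤ Real.sin (lineAngle u v) :=
  Real.sin_nonneg_of_nonneg_of_le_pi (lineAngle_nonneg u v)
    ((lineAngle_le_pi_div_two u v).trans (by linarith [Real.pi_pos]))

lemma lineAngle_smul_left {r : ℝ} (hr : r ≠ 0) (u v : E) :
    lineAngle (r • u) v = lineAngle u v := by
  unfold lineAngle
  rw [real_inner_smul_left, norm_smul, Real.norm_eq_abs, abs_mul, mul_assoc,
    mul_div_mul_left _ _ (abs_ne_zero.2 hr)]

/-- For a unit vector `u`, `sin (lineAngle u v)` is the distance from `u` to the line `ℝ v`. -/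
lemma sq_norm_sub_smul {u v : E} (hu : ‖u‖ = 1) (hv : v ≠ 0) (r : ℝ) :
    ‖u - r • v‖ ^ 2 = Real.sin (lineAngle u v) ^ 2 + (r * ‖v‖ - ⟪u, v⟫ / ‖v‖) ^ 2 := by
  have hv' : ‖v‖ ≠ 0 := norm_ne_zero_iff.2 hv
  have hc := abs_real_inner_div_norm_mul_norm_le_one u v
  rw [abs_div, abs_mul, abs_norm, abs_norm, hu, one_mul] at hc
  have hc2 : (|⟪u, v⟫| / ‖v‖) ^ 2 ≤ 1 := by
    rw [sq_le_one_iff_abs_le_one, abs_div, abs_abs, abs_norm]; exact hc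
  rw [lineAngle, hu, one_mul, Real.sin_arccos, Real.sq_sqrt (by linarith), div_pow, sq_abs,
    norm_sub_sq_real, real_inner_smul_right, norm_smul, Real.norm_eq_abs, mul_pow, sq_abs, hu]
  field_simp
  ring

lemma sin_lineAngle_le_norm_sub_smul {u v : E} (hu : ‖u‖ = 1) (hv : v ≠ 0) (r : ℝ) :
    Real.sin (lineAngle u v) ≤ ‖u - r • v‖ := by
  have hsin := sin_lineAngle_nonneg u v
  rw [← pow_le_pow_iff_left₀ hsin (norm_nonneg _) two_ne_zero, sq_norm_sub_smul hu hv r]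
  nlinarith

lemma exists_norm_sub_smul_eq_sin_lineAngle {u v : E} (hu : ‖u‖ = 1) (hv : v ≠ 0) :
    ∃ r : ℝ, ‖u - r • v‖ = Real.sin (lineAngle u v) := by
  have hv' : ‖v‖ ≠ 0 := norm_ne_zero_iff.2 hv
  have hsin := sin_lineAngle_nonneg u v
  refine ⟨⟪u, v⟫ / ‖v‖ ^ 2, (sq_eq_sq₀ (norm_nonneg _) hsin).1 ?_⟩
  rw [sq_norm_sub_smul hu hv]
  field_simp
  ring

lemma lineAngle_le_pi_div_two_mul_norm_sub {u v : E} (hu : ‖u‖ = 1) (hv : v ≠ 0) :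
    lineAngle u v ≤ Real.pi / 2 * ‖u - v‖ := by
  have hjordan := Real.mul_le_sin (lineAngle_nonneg u v) (lineAngle_le_pi_div_two u v)
  have hdist := sin_lineAngle_le_norm_sub_smul hu hv 1
  rw [one_smul] at hdist
  have hπ := Real.pi_pos
  rw [div_mul_eq_mul_div, div_le_iff₀ hπ] at hjordan
  nlinarith

end LineAngle

section AngleToSubspace

variable {E : Type*} [NormedAddCommGroup E] [InnerProductSpace ℝ E]

/-- The inner `min` in `maxAngle`: the angle between `u` and the subspace `V`. -/
noncomputable def angleToSubspace (u : E) (V : Submodule ℝ E) : ℝ :=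
  sInf (lineAngle u '' {v : E | v ∈ V ∧ v ≠ 0})

lemma bddBelow_lineAngle_image (u : E) (s : Set E) : BddBelow (lineAngle u '' s) :=
  ⟨0, by rintro _ ⟨v, -, rfl⟩; exact lineAngle_nonneg u v⟩

lemma angleToSubspace_nonneg (u : E) (V : Submodule ℝ E) : 0 ≤ angleToSubspace u V :=
  Real.sInf_nonneg (by rintro _ ⟨v, -, rfl⟩; exact lineAngle_nonneg u v)

lemma angleToSubspace_le_lineAngle {u v : E} {V : Submodule ℝ E} (hv : v ∈ V) (hv0 : v ≠ 0) :
    angleToSubspace u V ≤ lineAngle u v :=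
  csInf_le (bddBelow_lineAngle_image u _) ⟨v, ⟨hv, hv0⟩, rfl⟩

lemma angleToSubspace_le_pi_div_two (u : E) (V : Submodule ℝ E) :
    angleToSubspace u V ≤ Real.pi / 2 := by
  by_cases hV : V = ⊥
  · have hempty : {v : E | v ∈ V ∧ v ≠ 0} = ∅ := by
      ext v; simp [hV]
    rw [angleToSubspace, hempty, Set.image_empty, Real.sInf_empty]
    positivity
  · obtain ⟨v, hv, hv0⟩ := Submodule.exists_mem_ne_zero_of_ne_bot hV
    exact (angleToSubspace_le_lineAngle hv hv0).trans (lineAngle_le_pi_div_two u v)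

lemma exists_lineAngle_lt_of_angleToSubspace_lt {u : E} {V : Submodule ℝ E} (hV : V ≠ ⊥)
    {θ : ℝ} (h : angleToSubspace u V < θ) : ∃ v ∈ V, v ≠ 0 ∧ lineAngle u v < θ := by
  obtain ⟨v, hv, hv0⟩ := Submodule.exists_mem_ne_zero_of_ne_bot hV
  have hne : (lineAngle u '' {v : E | v ∈ V ∧ v ≠ 0}).Nonempty := ⟨_, v, ⟨hv, hv0⟩, rfl⟩
  obtain ⟨_, ⟨w, ⟨hw, hw0⟩, rfl⟩, hlt⟩ := exists_lt_of_csInf_lt hne h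
  exact ⟨w, hw, hw0, hlt⟩

lemma maxAngle_nonneg (U V : Submodule ℝ E) : 0 ≤ maxAngle U V :=
  Real.sSup_nonneg (by rintro _ ⟨u, -, rfl⟩; exact angleToSubspace_nonneg u V)

lemma angleToSubspace_le_maxAngle {U V : Submodule ℝ E} {u : E} (hu : u ∈ U) (hu0 : u ≠ 0) :
    angleToSubspace u V ≤ maxAngle U V :=
  le_csSup ⟨Real.pi / 2, by rintro _ ⟨w, -, rfl⟩; exact angleToSubspace_le_pi_div_two w V⟩
    ⟨u, ⟨hu, hu0⟩, rfl⟩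

lemma maxAngle_le {U V : Submodule ℝ E} {c : ℝ} (hc : 0 ≤ c)
    (h : ∀ u ∈ U, u ≠ 0 → angleToSubspace u V ≤ c) : maxAngle U V ≤ c :=
  Real.sSup_le (by rintro _ ⟨u, ⟨hu, hu0⟩, rfl⟩; exact h u hu hu0) hc

end AngleToSubspace

section Transversal

variable {E : Type*} [NormedAddCommGroup E] [InnerProductSpace ℝ E]

lemma abs_inner_le_cos_mul_of_le_minAngle {V W : Submodule ℝ E} (hsup : V ⊔ W = ⊤) {γ : ℝ}
    (hγ : 0 ≤ γ) (hmin : γ ≤ minAngle V W) {a b : E} (ha : a ∈ V ⊓ (V ⊓ W)ᗮ)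
    (hb : b ∈ W ⊓ (V ⊓ W)ᗮ) : |⟪a, b⟫| ≤ Real.cos γ * (‖a‖ * ‖b‖) := by
  rcases eq_or_ne a 0 with rfl | ha0
  · simp
  rcases eq_or_ne b 0 with rfl | hb0
  · simp
  have hnondeg : ¬(V ⊓ (V ⊓ W)ᗮ = ⊥ ∨ W ⊓ (V ⊓ W)ᗮ = ⊥) := by
    rintro (h | h)
    · exact ha0 (by simpa [h] using ha)
    · exact hb0 (by simpa [h] using hb)
  have hangle : γ ≤ lineAngle a b := by
    refine hmin.trans ?_
    rw [minAngle, if_pos hsup, if_neg hnondeg]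
    exact csInf_le ⟨0, by rintro _ ⟨u, -, -, v, -, -, rfl⟩; exact lineAngle_nonneg u v⟩
      ⟨a, ha, ha0, b, hb, hb0, rfl⟩
  have hcos : Real.cos (lineAngle a b) ≤ Real.cos γ :=
    Real.cos_le_cos_of_nonneg_of_le_pi hγ
      ((lineAngle_le_pi_div_two a b).trans (by linarith [Real.pi_pos])) hangle
  rw [cos_lineAngle] at hcos
  rwa [div_le_iff₀ (by positivity)] at hcos

lemma norm_le_inv_sqrt_mul_norm_add {a b : E} {κ : ℝ} (hκ0 : 0 ≤ κ) (hκ1 : κ < 1)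
    (h : |⟪a, b⟫| ≤ κ * (‖a‖ * ‖b‖)) : ‖a‖ ≤ (√(1 - κ))⁻¹ * ‖a + b‖ := by
  have hs : 0 < √(1 - κ) := Real.sqrt_pos.2 (by linarith)
  rw [le_inv_mul_iff₀ hs, ← pow_le_pow_iff_left₀ (by positivity) (norm_nonneg _) two_ne_zero,
    mul_pow, Real.sq_sqrt (by linarith), norm_add_sq_real]
  nlinarith [abs_le.1 h, sq_nonneg (‖a‖ - ‖b‖), norm_nonneg a, norm_nonneg b]

/-- `(1 - cos γ)^(-1/2)` bounds the `V`-part of the decomposition below, the `1` comes from the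
triangle inequality for the `W`-part. -/
noncomputable def transversalityConst (γ : ℝ) : ℝ := 1 + (√(1 - Real.cos γ))⁻¹

lemma transversalityConst_pos (γ : ℝ) : 0 < transversalityConst γ := by
  unfold transversalityConst; positivity

/-- Split `e` along `V ⊓ W`, `V ⊓ (V ⊓ W)ᗮ` and `W ⊓ (V ⊓ W)ᗮ`; the angle bound between the last two
pieces keeps the `V`-component of the orthogonal part from blowing up. -/
lemma exists_mem_sub_mem_norm_le_of_le_minAngle [FiniteDimensional ℝ E] {V W : Submodule ℝ E}
    (hsup : V ⊔ W = ⊤) {γ : ℝ} (hγ0 : 0 < γ) (hγ : γ ≤ Real.pi / 2)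
    (hmin : γ ≤ minAngle V W) (e : E) :
    ∃ b ∈ W, e - b ∈ V ∧ ‖b‖ ≤ transversalityConst γ * ‖e‖ := by
  set T := V ⊓ W
  have hV : T ⊔ Tᗮ ⊓ V = V := Submodule.sup_orthogonal_inf_of_hasOrthogonalProjection inf_le_left
  have hW : T ⊔ Tᗮ ⊓ W = W := Submodule.sup_orthogonal_inf_of_hasOrthogonalProjection inf_le_right
  obtain ⟨v, hv, w, hw, rfl⟩ := Submodule.mem_sup.1 (hsup ▸ Submodule.mem_top (x := e))
  rw [← hV] at hv
  rw [← hW] at hw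
  obtain ⟨c₁, hc₁, a, ha, rfl⟩ := Submodule.mem_sup.1 hv
  obtain ⟨c₂, hc₂, b, hb, rfl⟩ := Submodule.mem_sup.1 hw
  have hκ0 : 0 ≤ Real.cos γ := Real.cos_nonneg_of_mem_Icc ⟨by linarith, hγ⟩
  have hκ1 : Real.cos γ < 1 := by
    simpa using Real.cos_lt_cos_of_nonneg_of_le_pi le_rfl (by linarith [Real.pi_pos]) hγ0
  have hinner := abs_inner_le_cos_mul_of_le_minAngle hsup hγ0.le hmin
    (inf_comm V Tᗮ ▸ ha) (inf_comm W Tᗮ ▸ hb)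
  have hpyth : ‖a + b‖ ≤ ‖c₁ + a + (c₂ + b)‖ := by
    have hc : c₁ + c₂ ∈ T := T.add_mem hc₁ hc₂
    have hab : a + b ∈ Tᗮ := Tᗮ.add_mem ha.1 hb.1
    have horth : ⟪a + b, c₁ + c₂⟫ = 0 := Submodule.inner_left_of_mem_orthogonal hc hab
    rw [show c₁ + a + (c₂ + b) = (a + b) + (c₁ + c₂) by abel]
    refine (pow_le_pow_iff_left₀ (norm_nonneg _) (norm_nonneg _) two_ne_zero).1 ?_
    rw [norm_add_sq_real (a + b), horth]
    nlinarith [sq_nonneg ‖c₁ + c₂‖]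
  refine ⟨c₁ + c₂ + b, W.add_mem (W.add_mem hc₁.2 hc₂.2) hb.2, ?_, ?_⟩
  · rw [show c₁ + a + (c₂ + b) - (c₁ + c₂ + b) = a by abel]
    exact ha.2
  · have ha_le := (norm_le_inv_sqrt_mul_norm_add hκ0 hκ1 hinner).trans
      (mul_le_mul_of_nonneg_left hpyth (by positivity))
    calc ‖c₁ + c₂ + b‖ = ‖c₁ + a + (c₂ + b) - a‖ := by congr 1; abel
      _ ≤ ‖c₁ + a + (c₂ + b)‖ + ‖a‖ := norm_sub_le _ _
      _ ≤ transversalityConst γ * ‖c₁ + a + (c₂ + b)‖ := by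
        unfold transversalityConst; linarith

end Transversal

section Intersection

variable {E : Type*} [NormedAddCommGroup E] [InnerProductSpace ℝ E] [FiniteDimensional ℝ E]
  {V W : Submodule ℝ E} {γ : ℝ}

lemma exists_mem_inf_lineAngle_le (hsup : V ⊔ W = ⊤) (hγ0 : 0 < γ) (hγ : γ ≤ Real.pi / 2)
    (hmin : γ ≤ minAngle V W) {u v : E} (huW : u ∈ W) (hu0 : u ≠ 0) (hvV : v ∈ V) (hv0 : v ≠ 0)
    (hsmall : transversalityConst γ * lineAngle u v < 1) :
    ∃ v' ∈ V ⊓ W, v' ≠ 0 ∧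
      lineAngle u v' ≤ Real.pi / 2 * transversalityConst γ * lineAngle u v := by
  set K := transversalityConst γ
  have hr0 : ‖u‖⁻¹ ≠ 0 := inv_ne_zero (norm_ne_zero_iff.2 hu0)
  set û := ‖u‖⁻¹ • u
  have hû : ‖û‖ = 1 := norm_smul_inv_norm hu0
  obtain ⟨r, hr⟩ := exists_norm_sub_smul_eq_sin_lineAngle hû hv0
  obtain ⟨b, hbW, hbV, hb⟩ := exists_mem_sub_mem_norm_le_of_le_minAngle hsup hγ0 hγ hmin (û - r • v)
  have hbK : ‖b‖ ≤ K * lineAngle u v := by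
    rw [hr, lineAngle_smul_left hr0] at hb
    exact hb.trans (mul_le_mul_of_nonneg_left (Real.sin_le (lineAngle_nonneg u v))
      (transversalityConst_pos γ).le)
  have hmemV : û - b ∈ V := by
    rw [show û - b = r • v + (û - r • v - b) by abel]
    exact V.add_mem (V.smul_mem r hvV) hbV
  have hne : û - b ≠ 0 := by
    intro h
    rw [sub_eq_zero.1 h] at hû
    linarith
  refine ⟨û - b, ⟨hmemV, W.sub_mem (W.smul_mem _ huW) hbW⟩, hne, ?_⟩
  calc lineAngle u (û - b) = lineAngle û (û - b) := (lineAngle_smul_left hr0 u _).symm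
    _ ≤ Real.pi / 2 * ‖û - (û - b)‖ := lineAngle_le_pi_div_two_mul_norm_sub hû hne
    _ = Real.pi / 2 * ‖b‖ := by rw [sub_sub_cancel]
    _ ≤ Real.pi / 2 * K * lineAngle u v := by
      rw [mul_assoc]; exact mul_le_mul_of_nonneg_left hbK (by positivity)

lemma angleToSubspace_inf_le (hsup : V ⊔ W = ⊤) (hγ0 : 0 < γ) (hγ : γ ≤ Real.pi / 2)
    (hmin : γ ≤ minAngle V W) (hVW : V ⊓ W ≠ ⊥) {u : E} (huW : u ∈ W) (hu0 : u ≠ 0) {δ : ℝ}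
    (hδ : angleToSubspace u V ≤ δ) (hsmall : transversalityConst γ * δ < 1) :
    angleToSubspace u (V ⊓ W) ≤ Real.pi / 2 * transversalityConst γ * δ := by
  set K := transversalityConst γ
  have hK0 : 0 < K := transversalityConst_pos γ
  have hV : V ≠ ⊥ := fun h => hVW (by rw [h, bot_inf_eq])
  have hK : Continuous fun θ : ℝ => Real.pi / 2 * K * θ := by fun_prop
  have hKsmall : ∀ᶠ θ in 𝓝[>] δ, K * θ < 1 :=
    nhdsWithin_le_nhds (((continuous_const.mul continuous_id).tendsto δ).eventually_lt_const
      hsmall)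
  refine ge_of_tendsto (x := 𝓝[>] δ) (hK.tendsto δ |>.mono_left nhdsWithin_le_nhds) ?_
  filter_upwards [self_mem_nhdsWithin, hKsmall] with θ (hθ : δ < θ) hKθ
  obtain ⟨v, hvV, hv0, hvθ⟩ :=
    exists_lineAngle_lt_of_angleToSubspace_lt hV (hδ.trans_lt hθ)
  obtain ⟨v', hv', hv'0, hangle⟩ := exists_mem_inf_lineAngle_le hsup hγ0 hγ hmin huW hu0 hvV
    hv0 (lt_of_le_of_lt (by gcongr) hKθ)
  calc angleToSubspace u (V ⊓ W) ≤ lineAngle u v' := angleToSubspace_le_lineAngle hv' hv'0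
    _ ≤ Real.pi / 2 * K * lineAngle u v := hangle
    _ ≤ Real.pi / 2 * K * θ := by gcongr

end Intersection

theorem stmt_11 (n : ℕ) (γ : ℝ) (hγ : 0 < γ) (d : ℕ) :
    ∃ C : ℝ, 0 < C ∧
      ∀ (U V W : Submodule ℝ (EuclideanSpace ℝ (Fin n))) (δ : ℝ),
        Module.finrank ℝ U = d → Module.finrank ℝ V = d →
        V ⊔ W = ⊤ → γ ≤ minAngle V W → maxAngle U V ≤ δ →
        U ⊓ W ≠ ⊥ → V ⊓ W ≠ ⊥ →
        Module.finrank ℝ (U ⊓ W : Submodule ℝ (EuclideanSpace ℝ (Fin n)))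
          = Module.finrank ℝ (V ⊓ W : Submodule ℝ (EuclideanSpace ℝ (Fin n))) →
        maxAngle (U ⊓ W) (V ⊓ W) ≤ C * δ := by
  have hπ := Real.pi_pos
  set γ' := min γ (Real.pi / 2)
  have hγ'0 : 0 < γ' := lt_min hγ (by positivity)
  set K := transversalityConst γ'
  have hK : 0 < K := transversalityConst_pos γ'
  refine ⟨Real.pi * K, by positivity, fun U V W δ _ _ hsup hmin hmax _ hVW _ => ?_⟩
  have hδ : 0 ≤ δ := (maxAngle_nonneg U V).trans hmax
  refine maxAngle_le (by positivity) fun u hu hu0 => ?_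
  by_cases hbig : 1 / 2 ≤ K * δ
  · calc angleToSubspace u (V ⊓ W) ≤ Real.pi / 2 := angleToSubspace_le_pi_div_two u _
      _ ≤ Real.pi * K * δ := by nlinarith
  · calc angleToSubspace u (V ⊓ W) ≤ Real.pi / 2 * K * δ :=
          angleToSubspace_inf_le hsup hγ'0 (min_le_right _ _) ((min_le_left _ _).trans hmin) hVW
            hu.2 hu0 ((angleToSubspace_le_maxAngle hu.1 hu0).trans hmax) (by linarith)
      _ ≤ Real.pi * K * δ := by gcongr; linarith
end

section
/- Let η > 0, let E = ℝᵃ × ℝᵇ with the product inner product, and let τ, τ' : ℝᵃ → ℝᵇ be differentiable maps. Suppose that at a point x ∈ ℝᵃ either |τ(x)| ≥ η, or Dτ(x) : ℝᵃ → ℝᵇ is surjective with a right inverse of norm ≤ η⁻¹. If sup(|τ(x) - τ'(x)|, ‖Dτ(x) - Dτ'(x)‖) ≤ ε with 0 ≤ ε < η, then at x either |τ'(x)| ≥ η - ε, or Dτ'(x) is surjective with a right inverse of norm ≤ (η - ε)⁻¹. In other words, η-transversality to 0 at a point is an open condition which degrades linearly under C¹-perturbations. -/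
theorem stmt_15 (a b : ℕ) (η ε : ℝ) (hη : 0 < η) (hε0 : 0 ≤ ε) (hεη : ε < η)
    (τ τ' : EuclideanSpace ℝ (Fin a) → EuclideanSpace ℝ (Fin b))
    (hτ : Differentiable ℝ τ) (hτ' : Differentiable ℝ τ')
    (x : EuclideanSpace ℝ (Fin a))
    (htrans : η ≤ ‖τ x‖ ∨ (Function.Surjective (fderiv ℝ τ x) ∧
      ∃ θ : EuclideanSpace ℝ (Fin b) →L[ℝ] EuclideanSpace ℝ (Fin a),
        (fderiv ℝ τ x).comp θ = ContinuousLinearMap.id ℝ (EuclideanSpace ℝ (Fin b)) ∧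
          ‖θ‖ ≤ η⁻¹))
    (hpert0 : ‖τ x - τ' x‖ ≤ ε) (hpert1 : ‖fderiv ℝ τ x - fderiv ℝ τ' x‖ ≤ ε) :
    η - ε ≤ ‖τ' x‖ ∨ (Function.Surjective (fderiv ℝ τ' x) ∧
      ∃ θ' : EuclideanSpace ℝ (Fin b) →L[ℝ] EuclideanSpace ℝ (Fin a),
        (fderiv ℝ τ' x).comp θ' = ContinuousLinearMap.id ℝ (EuclideanSpace ℝ (Fin b)) ∧
          ‖θ'‖ ≤ (η - ε)⁻¹) := by
  rcases htrans with h | ⟨-, θ, hθ, hθn⟩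
  · left
    have h2 := norm_sub_norm_le (τ x) (τ' x)
    linarith
  · right
    have hηinv : (0:ℝ) < η⁻¹ := inv_pos.mpr hη
    have hun : ‖(fderiv ℝ τ x - fderiv ℝ τ' x).comp θ‖ ≤ ε * η⁻¹ := by
      refine le_trans (ContinuousLinearMap.opNorm_comp_le _ _) ?_
      exact mul_le_mul hpert1 hθn (norm_nonneg _) hε0
    have hεη1 : ε * η⁻¹ < 1 := by
      have : ε / η < 1 := (div_lt_one hη).mpr hεη
      rwa [div_eq_mul_inv] at this
    have hu1 : ‖(fderiv ℝ τ x - fderiv ℝ τ' x).comp θ‖ < 1 := lt_of_le_of_lt hun hεη1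
    have hvmul : (1 - (fderiv ℝ τ x - fderiv ℝ τ' x).comp θ) *
        (∑' n : ℕ, ((fderiv ℝ τ x - fderiv ℝ τ' x).comp θ) ^ n) = 1 :=
      mul_neg_geom_series _ hu1
    have hright : (fderiv ℝ τ' x).comp
        (θ.comp (∑' n : ℕ, ((fderiv ℝ τ x - fderiv ℝ τ' x).comp θ) ^ n)) =
        ContinuousLinearMap.id ℝ (EuclideanSpace ℝ (Fin b)) := by
      have h1 : (fderiv ℝ τ' x).comp θ =
          1 - (fderiv ℝ τ x - fderiv ℝ τ' x).comp θ := by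
        rw [ContinuousLinearMap.sub_comp, hθ]
        simp [ContinuousLinearMap.one_def]
      calc (fderiv ℝ τ' x).comp
            (θ.comp (∑' n : ℕ, ((fderiv ℝ τ x - fderiv ℝ τ' x).comp θ) ^ n))
          = ((fderiv ℝ τ' x).comp θ).comp
            (∑' n : ℕ, ((fderiv ℝ τ x - fderiv ℝ τ' x).comp θ) ^ n) := by
            rw [ContinuousLinearMap.comp_assoc]
        _ = (1 - (fderiv ℝ τ x - fderiv ℝ τ' x).comp θ) *
            (∑' n : ℕ, ((fderiv ℝ τ x - fderiv ℝ τ' x).comp θ) ^ n) := by rw [h1]; rfl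
        _ = ContinuousLinearMap.id ℝ (EuclideanSpace ℝ (Fin b)) := hvmul
    have hsurj : Function.Surjective (fderiv ℝ τ' x) := by
      intro y
      exact ⟨θ.comp (∑' n : ℕ, ((fderiv ℝ τ x - fderiv ℝ τ' x).comp θ) ^ n) y, by
        have := congrArg (fun f => f y) hright
        simpa using this⟩
    refine ⟨hsurj, θ.comp (∑' n : ℕ, ((fderiv ℝ τ x - fderiv ℝ τ' x).comp θ) ^ n),
      hright, ?_⟩
    have hone : ‖(1 : EuclideanSpace ℝ (Fin b) →L[ℝ] EuclideanSpace ℝ (Fin b))‖ ≤ 1 :=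
      ContinuousLinearMap.norm_id_le
    have hvn : ‖∑' n : ℕ, ((fderiv ℝ τ x - fderiv ℝ τ' x).comp θ) ^ n‖ ≤
        (1 - ‖(fderiv ℝ τ x - fderiv ℝ τ' x).comp θ‖)⁻¹ := by
      have := tsum_geometric_le_of_norm_lt_one _ hu1
      linarith
    have hvn2 : ‖∑' n : ℕ, ((fderiv ℝ τ x - fderiv ℝ τ' x).comp θ) ^ n‖ ≤
        (1 - ε * η⁻¹)⁻¹ :=
      hvn.trans (inv_anti₀ (by linarith) (by linarith))
    have hθ'n : ‖θ.comp (∑' n : ℕ, ((fderiv ℝ τ x - fderiv ℝ τ' x).comp θ) ^ n)‖ ≤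
        η⁻¹ * (1 - ε * η⁻¹)⁻¹ := by
      refine le_trans (ContinuousLinearMap.opNorm_comp_le _ _) ?_
      exact mul_le_mul hθn hvn2 (norm_nonneg _) (le_of_lt hηinv)
    refine hθ'n.trans (le_of_eq ?_)
    rw [← mul_inv]
    congr 1
    field_simp
end

section
/- Let (V, ⟨·,·⟩) be a real inner product space with a compatible complex structure J (J orthogonal, J² = -id), and let ω(u,v) = ⟨Ju, v⟩. Let L : V → ℂ be a real-linear map, and decompose it as L = ∂L + ∂̄L with ∂L = ½(L - i·L∘J) complex linear and ∂̄L = ½(L + i·L∘J) complex antilinear. If ∂L is surjective with a right inverse of norm ≤ η⁻¹ and ‖∂̄L‖ < η, then ker L ⊂ V is a real codimension-2 subspace on which ω restricts nondegenerately (i.e. ker L is a symplectic subspace of (V, ω)). -/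
open RealInnerProductSpace

private lemma phase_aux17 (ζ : ℂ) : ∃ μ : ℂ, μ.re ^ 2 + μ.im ^ 2 = 1 ∧
    ((μ.re : ℂ) - (μ.im : ℂ) * Complex.I) * ζ = ((‖ζ‖ : ℝ) : ℂ) := by
  rcases eq_or_ne ζ 0 with h | h
  · exact ⟨1, by norm_num, by simp [h]⟩
  · have habs : (0:ℝ) < ‖ζ‖ := norm_pos_iff.mpr h
    refine ⟨ζ / ((‖ζ‖ : ℝ) : ℂ), ?_, ?_⟩
    · have h1 : Complex.normSq (ζ / ((‖ζ‖ : ℝ) : ℂ)) = 1 := by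
        rw [map_div₀ Complex.normSq, Complex.normSq_eq_norm_sq, Complex.normSq_eq_norm_sq,
          Complex.norm_real, Real.norm_eq_abs, abs_of_pos habs]
        field_simp
      have h2 := Complex.normSq_apply (ζ / ((‖ζ‖ : ℝ) : ℂ))
      rw [h1] at h2
      rw [pow_two, pow_two]
      linarith [h2.symm]
    · have hconj : (((ζ / ((‖ζ‖ : ℝ) : ℂ)).re : ℂ)
          - ((ζ / ((‖ζ‖ : ℝ) : ℂ)).im : ℂ) * Complex.I)
          = (starRingEnd ℂ) (ζ / ((‖ζ‖ : ℝ) : ℂ)) := by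
        apply Complex.ext <;> simp [neg_div]
      rw [hconj, map_div₀, Complex.conj_ofReal, div_mul_eq_mul_div, mul_comm,
        Complex.mul_conj, Complex.normSq_eq_norm_sq]
      have : ((‖ζ‖ : ℝ) : ℂ) ≠ 0 := by
        simpa using habs.ne'
      push_cast
      field_simp

set_option maxHeartbeats 1000000 in
theorem stmt_17 (V : Type*) [NormedAddCommGroup V] [InnerProductSpace ℝ V]
    [FiniteDimensional ℝ V] (hVdim : Even (Module.finrank ℝ V))
    (J : V →L[ℝ] V) (hJ2 : ∀ v, J (J v) = -v)
    (hJorth : ∀ v w : V, ⟪J v, J w⟫ = ⟪v, w⟫)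
    (L : V →L[ℝ] ℂ) (η : ℝ) (hη : 0 < η)
    (hsurj : Function.Surjective ((1 / 2 : ℝ) • (L - Complex.I • L.comp J)))
    (θ : ℂ →L[ℝ] V)
    (hθ : ((1 / 2 : ℝ) • (L - Complex.I • L.comp J)).comp θ
      = ContinuousLinearMap.id ℝ ℂ)
    (hθn : ‖θ‖ ≤ η⁻¹)
    (hbar : ‖(1 / 2 : ℝ) • (L + Complex.I • L.comp J)‖ < η) :
    Module.finrank ℝ (LinearMap.ker (L : V →ₗ[ℝ] ℂ)) = Module.finrank ℝ V - 2 ∧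
      ∀ v ∈ LinearMap.ker (L : V →ₗ[ℝ] ℂ), v ≠ 0 →
        ∃ w ∈ LinearMap.ker (L : V →ₗ[ℝ] ℂ), ⟪J v, w⟫ ≠ 0 := by
  obtain ⟨D, hD⟩ : ∃ D : V →L[ℝ] ℂ, D = (1 / 2 : ℝ) • (L - Complex.I • L.comp J) := ⟨_, rfl⟩
  obtain ⟨B, hB⟩ : ∃ B : V →L[ℝ] ℂ, B = (1 / 2 : ℝ) • (L + Complex.I • L.comp J) := ⟨_, rfl⟩
  rw [← hD] at hθ hsurj
  rw [← hB] at hbar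
  have hDB : ∀ x, D x + B x = L x := by
    intro x
    rw [hD, hB]
    simp only [ContinuousLinearMap.smul_apply, ContinuousLinearMap.sub_apply,
      ContinuousLinearMap.add_apply, ContinuousLinearMap.comp_apply, smul_eq_mul,
      Complex.real_smul]
    push_cast
    ring
  have hDJ : ∀ x, D (J x) = Complex.I * D x := by
    intro x
    rw [hD]
    simp only [ContinuousLinearMap.smul_apply, ContinuousLinearMap.sub_apply,
      ContinuousLinearMap.comp_apply, smul_eq_mul, Complex.real_smul, hJ2, map_neg]
    ring_nf
    simp [Complex.I_sq]
    try ring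
  have hBJ : ∀ x, B (J x) = -(Complex.I * B x) := by
    intro x
    rw [hB]
    simp only [ContinuousLinearMap.smul_apply, ContinuousLinearMap.add_apply,
      ContinuousLinearMap.comp_apply, smul_eq_mul, Complex.real_smul, hJ2, map_neg]
    ring_nf
    simp [Complex.I_sq]
    try ring
  have hDθ : ∀ z : ℂ, D (θ z) = z := by
    intro z
    have := ContinuousLinearMap.ext_iff.mp hθ z
    simpa using this
  have hηinv : (0:ℝ) < η⁻¹ := inv_pos.mpr hη
  have hBnn : (0:ℝ) ≤ ‖B‖ := norm_nonneg _
  -- Part 1: L is surjective, so finrank ker L = finrank V - 2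
  have hLsurj : Function.Surjective L := by
    have hinj : Function.Injective (L.comp θ : ℂ →ₗ[ℝ] ℂ) := by
      rw [← LinearMap.ker_eq_bot, LinearMap.ker_eq_bot']
      intro z hz
      have hz' : L (θ z) = 0 := hz
      have h1 : L (θ z) = z + B (θ z) := by rw [← hDB (θ z), hDθ]
      rw [h1] at hz'
      have h2 : z = -(B (θ z)) := eq_neg_of_add_eq_zero_left hz'
      have heq : ‖z‖ = ‖B (θ z)‖ := by
        conv_lhs => rw [h2, norm_neg]
      have h3 : ‖B (θ z)‖ ≤ ‖B‖ * (‖θ‖ * ‖z‖) :=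
        (B.le_opNorm _).trans (mul_le_mul_of_nonneg_left (θ.le_opNorm z) hBnn)
      have hBθ1 : ‖B‖ * ‖θ‖ < 1 := by
        calc ‖B‖ * ‖θ‖ ≤ ‖B‖ * η⁻¹ := mul_le_mul_of_nonneg_left hθn hBnn
          _ < η * η⁻¹ := mul_lt_mul_of_pos_right hbar hηinv
          _ = 1 := mul_inv_cancel₀ hη.ne'
      have h4 : ‖z‖ ≤ 0 := by nlinarith [norm_nonneg z]
      exact norm_le_zero_iff.mp h4
    have hs : Function.Surjective (L.comp θ : ℂ →ₗ[ℝ] ℂ) :=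
      LinearMap.injective_iff_surjective.mp hinj
    intro c
    obtain ⟨z, hz⟩ := hs c
    exact ⟨θ z, hz⟩
  have hrank : Module.finrank ℝ (LinearMap.ker (L : V →ₗ[ℝ] ℂ)) = Module.finrank ℝ V - 2 := by
    have h := LinearMap.finrank_range_add_finrank_ker (L : V →ₗ[ℝ] ℂ)
    have hrg : LinearMap.range (L : V →ₗ[ℝ] ℂ) = ⊤ := LinearMap.range_eq_top.mpr hLsurj
    rw [hrg, finrank_top, Complex.finrank_real_complex] at h
    have hker : LinearMap.ker (L : V →ₗ[ℝ] ℂ) = LinearMap.ker (L : V →ₗ[ℝ] ℂ) := rfl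
    rw [hker] at h
    omega
  refine ⟨hrank, ?_⟩
  -- Part 2
  intro v hv hv0
  by_contra hcon
  push_neg at hcon
  have hvK : L v = 0 := LinearMap.mem_ker.mp hv
  have hskew : ∀ x y : V, ⟪x, J y⟫ = -⟪J x, y⟫ := by
    intro x y
    have h := hJorth x (J y)
    rw [hJ2, inner_neg_right] at h
    linarith
  have hxJx : ∀ x : V, ⟪x, J x⟫ = 0 := by
    intro x
    have h := hskew x x
    have h2 : ⟪J x, x⟫ = ⟪x, J x⟫ := real_inner_comm _ _
    linarith
  have hr2pos : (0:ℝ) < ⟪v, v⟫ := by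
    rw [real_inner_self_eq_norm_sq]
    exact pow_pos (norm_pos_iff.mpr hv0) 2
  obtain ⟨u₀, hu0⟩ : ∃ x : V, x = θ 1 := ⟨_, rfl⟩
  have hDu₀ : D u₀ = 1 := by rw [hu0]; exact hDθ 1
  have hu₀n : ‖u₀‖ ≤ η⁻¹ := by
    rw [hu0]
    calc ‖θ (1:ℂ)‖ ≤ ‖θ‖ * ‖(1:ℂ)‖ := θ.le_opNorm 1
      _ = ‖θ‖ := by simp
      _ ≤ η⁻¹ := hθn
  obtain ⟨a, ha⟩ : ∃ a : ℝ, a = ⟪v, u₀⟫ / ⟪v, v⟫ := ⟨_, rfl⟩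
  obtain ⟨b, hb⟩ : ∃ b : ℝ, b = ⟪J v, u₀⟫ / ⟪v, v⟫ := ⟨_, rfl⟩
  obtain ⟨p, hp⟩ : ∃ p : V, p = a • v + b • (J v) := ⟨_, rfl⟩
  obtain ⟨w, hw⟩ : ∃ w : V, w = u₀ - p := ⟨_, rfl⟩
  have hu₀pw : u₀ = p + w := by rw [hw]; abel
  have hJvJv : ⟪J v, J v⟫ = ⟪v, v⟫ := hJorth v v
  have hvJv : ⟪v, J v⟫ = 0 := hxJx v
  have hJvv : ⟪J v, v⟫ = 0 := by rw [real_inner_comm]; exact hvJv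
  have hvw : ⟪v, w⟫ = 0 := by
    rw [hw, hp, inner_sub_right, inner_add_right, real_inner_smul_right,
      real_inner_smul_right, hvJv, ha]
    field_simp
    ring
  have hJvw : ⟪J v, w⟫ = 0 := by
    rw [hw, hp, inner_sub_right, inner_add_right, real_inner_smul_right,
      real_inner_smul_right, hJvv, hJvJv, hb]
    field_simp
    ring
  have hvJw : ⟪v, J w⟫ = 0 := by rw [hskew, hJvw]; ring
  have hJvJw : ⟪J v, J w⟫ = 0 := by rw [hJorth]; exact hvw
  -- α = L w, β = L (J w), z = L (J v); determinant of (α, β) vanishes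
  obtain ⟨α, hα⟩ : ∃ α : ℂ, α = L w := ⟨_, rfl⟩
  obtain ⟨β, hβ⟩ : ∃ β : ℂ, β = L (J w) := ⟨_, rfl⟩
  obtain ⟨z, hz⟩ : ∃ z : ℂ, z = L (J v) := ⟨_, rfl⟩
  have hdet : α.re * β.im - α.im * β.re = 0 := by
    by_contra hne
    obtain ⟨s, hs⟩ : ∃ s : ℝ,
      s = (z.re * β.im - z.im * β.re) / (α.re * β.im - α.im * β.re) := ⟨_, rfl⟩
    obtain ⟨t, ht⟩ : ∃ t : ℝ,
      t = (α.re * z.im - α.im * z.re) / (α.re * β.im - α.im * β.re) := ⟨_, rfl⟩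
    have hk : L (J v - s • w - t • (J w)) = 0 := by
      rw [map_sub, map_sub, map_smul, map_smul, ← hα, ← hβ, ← hz,
        Complex.real_smul, Complex.real_smul]
      rw [Complex.ext_iff]
      constructor
      · simp only [Complex.sub_re, Complex.mul_re, Complex.ofReal_re, Complex.ofReal_im,
          Complex.zero_re]
        rw [hs, ht]
        linear_combination (-z.re) * mul_inv_cancel₀ hne
      · simp only [Complex.sub_im, Complex.mul_im, Complex.ofReal_re, Complex.ofReal_im,
          Complex.zero_im]
        rw [hs, ht]
        linear_combination (-z.im) * mul_inv_cancel₀ hne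
    have h0 := hcon _ (LinearMap.mem_ker.mpr hk)
    rw [inner_sub_right, inner_sub_right, real_inner_smul_right, real_inner_smul_right,
      hJvw, hJvJw, hJvJv] at h0
    simp only [mul_zero, sub_zero] at h0
    linarith
  -- |D w| = |B w|
  have hDw : D w = (1/2 : ℂ) * (α - Complex.I * β) := by
    rw [hD]
    simp only [ContinuousLinearMap.smul_apply, ContinuousLinearMap.sub_apply,
      ContinuousLinearMap.comp_apply, smul_eq_mul, Complex.real_smul, ← hα, ← hβ]
    push_cast
    ring
  have hBw : B w = (1/2 : ℂ) * (α + Complex.I * β) := by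
    rw [hB]
    simp only [ContinuousLinearMap.smul_apply, ContinuousLinearMap.add_apply,
      ContinuousLinearMap.comp_apply, smul_eq_mul, Complex.real_smul, ← hα, ← hβ]
    push_cast
    ring
  have habs_w : ‖D w‖ = ‖B w‖ := by
    have key : ‖α - Complex.I * β‖ = ‖α + Complex.I * β‖ := by
      rw [Complex.norm_def, Complex.norm_def]
      congr 1
      simp only [Complex.normSq_apply, Complex.sub_re, Complex.sub_im, Complex.add_re,
        Complex.add_im, Complex.mul_re, Complex.mul_im, Complex.I_re, Complex.I_im]
      ring_nf
      linarith [hdet]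
    rw [hDw, hBw, norm_mul, norm_mul, key]
  -- |D p| = |B p|
  have hBv : B v = -(D v) := by
    have h := hDB v
    rw [hvK] at h
    linear_combination h
  have hDp : D p = ((a : ℂ) + (b : ℂ) * Complex.I) * D v := by
    rw [hp, map_add, map_smul, map_smul, hDJ, Complex.real_smul, Complex.real_smul]
    ring
  have hBp : B p = (-(a : ℂ) + (b : ℂ) * Complex.I) * D v := by
    rw [hp, map_add, map_smul, map_smul, hBJ, hBv, Complex.real_smul, Complex.real_smul]
    ring
  have habs_p : ‖D p‖ = ‖B p‖ := by
    rw [hDp, hBp, norm_mul, norm_mul]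
    congr 1
    rw [Complex.norm_def, Complex.norm_def]
    congr 1
    simp only [Complex.normSq_apply, Complex.add_re, Complex.add_im, Complex.neg_re,
      Complex.neg_im, Complex.mul_re, Complex.mul_im, Complex.ofReal_re, Complex.ofReal_im,
      Complex.I_re, Complex.I_im]
    ring
  -- phase alignment
  obtain ⟨μ, hμ1, hμ2⟩ := phase_aux17 (B p)
  obtain ⟨lam, hl1, hl2⟩ := phase_aux17 (B w)
  obtain ⟨P, hP⟩ : ∃ P : V, P = μ.re • p + μ.im • (J p) := ⟨_, rfl⟩
  obtain ⟨Q, hQ⟩ : ∃ Q : V, Q = lam.re • w + lam.im • (J w) := ⟨_, rfl⟩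
  have hBu' : B (P + Q) = ((‖B p‖ + ‖B w‖ : ℝ) : ℂ) := by
    rw [map_add, hP, hQ, map_add, map_add, map_smul, map_smul, map_smul, map_smul,
      hBJ p, hBJ w, Complex.real_smul, Complex.real_smul, Complex.real_smul,
      Complex.real_smul]
    have e1 : (μ.re : ℂ) * B p + (μ.im : ℂ) * -(Complex.I * B p)
        = ((μ.re : ℂ) - (μ.im : ℂ) * Complex.I) * B p := by ring
    have e2 : (lam.re : ℂ) * B w + (lam.im : ℂ) * -(Complex.I * B w)
        = ((lam.re : ℂ) - (lam.im : ℂ) * Complex.I) * B w := by ring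
    rw [e1, e2, hμ2, hl2]
    push_cast
    ring
  -- orthogonality facts for the norm computation
  have hpw : ⟪p, w⟫ = 0 := by
    rw [hp, inner_add_left, real_inner_smul_left, real_inner_smul_left, hvw, hJvw]
    ring
  have hpJw : ⟪p, J w⟫ = 0 := by
    rw [hp, inner_add_left, real_inner_smul_left, real_inner_smul_left, hvJw, hJvJw]
    ring
  have hJpw : ⟪J p, w⟫ = 0 := by
    have h := hskew p w
    rw [hpJw] at h
    -- h : 0 = -⟪J p, w⟫
    linarith [h]
  have hJpJw : ⟪J p, J w⟫ = 0 := by rw [hJorth]; exact hpw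
  have hPQ : ⟪P, Q⟫ = 0 := by
    rw [hP, hQ]
    simp only [inner_add_left, inner_add_right, real_inner_smul_left, real_inner_smul_right,
      hpw, hpJw, hJpw, hJpJw]
    ring
  have hPP : ⟪P, P⟫ = ⟪p, p⟫ := by
    rw [hP]
    simp only [inner_add_left, inner_add_right, real_inner_smul_left, real_inner_smul_right,
      hxJx p, hJorth p p]
    have h2 : ⟪J p, p⟫ = 0 := by rw [real_inner_comm]; exact hxJx p
    rw [h2]
    linear_combination (inner ℝ p p : ℝ) * hμ1
  have hQQ : ⟪Q, Q⟫ = ⟪w, w⟫ := by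
    rw [hQ]
    simp only [inner_add_left, inner_add_right, real_inner_smul_left, real_inner_smul_right,
      hxJx w, hJorth w w]
    have h2 : ⟪J w, w⟫ = 0 := by rw [real_inner_comm]; exact hxJx w
    rw [h2]
    linear_combination (inner ℝ w w : ℝ) * hl1
  have hnormeq : ‖P + Q‖ ^ 2 = ‖u₀‖ ^ 2 := by
    rw [← real_inner_self_eq_norm_sq, ← real_inner_self_eq_norm_sq, hu₀pw]
    rw [inner_add_add_self, inner_add_add_self, hPP, hQQ, hPQ]
    have h3 : ⟪Q, P⟫ = 0 := by rw [real_inner_comm]; exact hPQ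
    have h4 : ⟪w, p⟫ = 0 := by rw [real_inner_comm]; exact hpw
    rw [h3, h4, hpw]
  have hu'n : ‖P + Q‖ ≤ η⁻¹ := by
    have h1 : ‖P + Q‖ ^ 2 ≤ (η⁻¹) ^ 2 := by
      rw [hnormeq]
      exact pow_le_pow_left₀ (norm_nonneg _) hu₀n 2
    exact le_of_pow_le_pow_left₀ two_ne_zero (le_of_lt hηinv) h1
  -- final contradiction
  have hsum1 : (1:ℝ) ≤ ‖B p‖ + ‖B w‖ := by
    have hDsplit : D u₀ = D p + D w := by rw [hu₀pw, map_add]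
    calc (1:ℝ) = ‖D u₀‖ := by rw [hDu₀]; simp
      _ = ‖D p + D w‖ := by rw [hDsplit]
      _ ≤ ‖D p‖ + ‖D w‖ := norm_add_le _ _
      _ = ‖B p‖ + ‖B w‖ := by rw [habs_p, habs_w]
  have hlt : (1:ℝ) < 1 := by
    calc (1:ℝ) ≤ ‖B p‖ + ‖B w‖ := hsum1
      _ = ‖B (P + Q)‖ := by
          rw [hBu', Complex.norm_real, Real.norm_eq_abs]
          exact (abs_of_nonneg (by positivity)).symm
      _ ≤ ‖B‖ * ‖P + Q‖ := B.le_opNorm _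
      _ ≤ ‖B‖ * η⁻¹ := mul_le_mul_of_nonneg_left hu'n hBnn
      _ < η * η⁻¹ := mul_lt_mul_of_pos_right hbar hηinv
      _ = 1 := mul_inv_cancel₀ hη.ne'
  exact absurd hlt (lt_irrefl 1)
end
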